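/- arXiv:2509.15351 — 2 statements merged into one kernel-verified Lean document; each statement's English description precedes it below -/
import Mathlib

section
/- Let 𝔤 be a simple (nonabelian) finite-dimensional Lie algebra of dimension d over a field K, let A be a generating set of 𝔤 (as a Lie algebra), and let b ∈ 𝔤 be a nonzero element. Then for every k ≤ d, the union T_{≤k}(A,b) = T_0(A,b) ∪ ⋯ ∪ T_k(A,b) spans a vector subspace of 𝔤 of dimension at least k. In particular, T_{≤d}(A,b) spans 𝔤. -/
/-!
Let `W k` be the span of `T_{≤k}(A,b)`. These subspaces increase with `k`, and `⁅a, W k⁆ ⊆ W (k+1)`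
for `a ∈ A`. If the chain stalls, `W (k+1) = W k`, then `W k` is stable under `ad a` for every
generator `a`, hence under all of `ad 𝔤`, so it is an ideal; it contains `b ≠ 0`, so by simplicity
it is `𝔤`. Hence the dimension of `W k` goes up by at least one at each step until it reaches `d`.
-/

variable {K : Type*} [Field K] {L : Type*} [LieRing L] [LieAlgebra K L]

/-- The absolute tower `T_k(A)`. -/
def tower (A : Set L) : ℕ → Set L
  | 0 => {0}
  | 1 => A
  | (k + 2) =>
      Set.image2 (fun a t => ⁅a, t⁆) A (tower A (k + 1)) ∪
        Set.image2 (fun t a => ⁅t, a⁆) (tower A (k + 1)) A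

/-- The relative tower `T_k(A, b)`. -/
def towerRel (A : Set L) (b : L) : ℕ → Set L
  | 0 => {0}
  | 1 => {b}
  | (k + 2) =>
      Set.image2 (fun x t => ⁅x, t⁆) {b} (tower A (k + 1)) ∪
        Set.image2 (fun t x => ⁅t, x⁆) (tower A (k + 1)) {b} ∪
        Set.image2 (fun a t => ⁅a, t⁆) A (towerRel A b (k + 1)) ∪
        Set.image2 (fun t a => ⁅t, a⁆) (towerRel A b (k + 1)) A

theorem Submodule.min_le_finrank_of_monotone {V : Type*} [AddCommGroup V] [Module K V]
    [FiniteDimensional K V] {W : ℕ → Submodule K V} (hW : Monotone W)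
    (hstall : ∀ k, W (k + 1) = W k → W k = ⊤) (k : ℕ) :
    min k (Module.finrank K V) ≤ Module.finrank K (W k) := by
  induction k with
  | zero => simp
  | succ k ih =>
    by_cases h : W (k + 1) = W k
    · rw [h, hstall k h, finrank_top]
      exact min_le_right _ _
    · have hlt := Submodule.finrank_lt_finrank_of_lt (lt_of_le_of_ne (hW (Nat.le_add_right k 1)) (Ne.symm h))
      omega

theorem LieSubalgebra.lie_mem_of_lieSpan_eq_top {A : Set L} (hA : lieSpan K L A = ⊤)
    {W : Submodule K L} (hW : ∀ a ∈ A, ∀ w ∈ W, ⁅a, w⁆ ∈ W) (x : L) {w : L} (hw : w ∈ W) :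
    ⁅x, w⁆ ∈ W := by
  have hx : x ∈ lieSpan K L A := hA ▸ mem_top x
  induction hx using lieSpan_induction generalizing w with
  | mem a ha => exact hW a ha w hw
  | zero => simp
  | add y z _ _ hy hz => rw [add_lie]; exact add_mem (hy hw) (hz hw)
  | smul c y _ hy => rw [smul_lie]; exact W.smul_mem c (hy hw)
  | lie y z _ _ hy hz => rw [lie_lie]; exact sub_mem (hy (hz hw)) (hz (hy hw))

theorem LieAlgebra.IsSimple.submodule_eq_top_of_lie_mem [LieAlgebra.IsSimple K L] {A : Set L}
    (hA : LieSubalgebra.lieSpan K L A = ⊤) {W : Submodule K L}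
    (hW : ∀ a ∈ A, ∀ w ∈ W, ⁅a, w⁆ ∈ W) {b : L} (hbW : b ∈ W) (hb : b ≠ 0) : W = ⊤ := by
  let I : LieIdeal K L :=
    { W with lie_mem := fun {x _} hw => LieSubalgebra.lie_mem_of_lieSpan_eq_top hA hW x hw }
  rcases LieAlgebra.IsSimple.eq_bot_or_eq_top I with hI | hI
  · have hbI : b ∈ I := hbW
    rw [hI, LieSubmodule.mem_bot] at hbI
    exact absurd hbI hb
  · exact congrArg LieSubmodule.toSubmodule hI

namespace towerRel

variable (K) (A : Set L) (b : L)

abbrev span (k : ℕ) : Submodule K L :=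
  Submodule.span K (⋃ j ∈ Finset.range (k + 1), towerRel A b j)

variable {A b}

theorem span_mono : Monotone (span K A b) := by
  refine monotone_nat_of_le_succ fun k => Submodule.span_mono ?_
  exact Set.biUnion_subset_biUnion_left (by simp)

theorem mem_span_of_mem {j k : ℕ} (hjk : j ≤ k) {x : L} (hx : x ∈ towerRel A b j) :
    x ∈ span K A b k :=
  Submodule.subset_span (Set.mem_biUnion (Finset.mem_range.mpr (by omega)) hx)

theorem self_mem_span {k : ℕ} (hk : 1 ≤ k) : b ∈ span K A b k :=
  mem_span_of_mem K hk rfl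

theorem lie_mem_succ {a : L} (ha : a ∈ A) {j : ℕ} {x : L} (hx : x ∈ towerRel A b (j + 1)) :
    ⁅a, x⁆ ∈ towerRel A b (j + 2) :=
  Or.inl (Or.inr (Set.mem_image2_of_mem ha hx))

theorem lie_mem_span_succ {a : L} (ha : a ∈ A) {k : ℕ} {x : L} (hx : x ∈ span K A b k) :
    ⁅a, x⁆ ∈ span K A b (k + 1) := by
  induction hx using Submodule.span_induction with
  | mem y hy =>
    obtain ⟨j, hj, hy⟩ := Set.mem_iUnion₂.mp hy
    rw [Finset.mem_range] at hj
    cases j with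
    | zero => obtain rfl : y = 0 := hy; simp
    | succ j => exact mem_span_of_mem K (by omega) (lie_mem_succ ha hy)
  | zero => simp
  | add y z _ _ hy hz => rw [lie_add]; exact add_mem hy hz
  | smul c y _ hy => rw [lie_smul]; exact Submodule.smul_mem _ c hy

theorem span_eq_top_of_succ_eq [LieAlgebra.IsSimple K L] (hA : LieSubalgebra.lieSpan K L A = ⊤)
    (hb : b ≠ 0) {k : ℕ} (h : span K A b (k + 1) = span K A b k) : span K A b k = ⊤ := by
  refine LieAlgebra.IsSimple.submodule_eq_top_of_lie_mem hA
    (fun a ha w hw => h ▸ lie_mem_span_succ K ha hw) ?_ hb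
  exact h ▸ self_mem_span K le_add_self

end towerRel

/-- For a simple finite-dimensional Lie algebra `𝔤` of dimension `d`, a generating set `A` and a
nonzero `b`, the union `T_{≤k}(A,b)` spans a subspace of dimension at least `k` for all `k ≤ d`;
in particular `T_{≤d}(A,b)` spans `𝔤`. -/
theorem stmt1 [FiniteDimensional K L] [LieAlgebra.IsSimple K L]
    (A : Set L) (hA : LieSubalgebra.lieSpan K L A = ⊤) (b : L) (hb : b ≠ 0) :
    (∀ k ≤ Module.finrank K L,
      k ≤ Module.finrank K
        ↥(Submodule.span K (⋃ j ∈ Finset.range (k + 1), towerRel A b j))) ∧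
    Submodule.span K (⋃ j ∈ Finset.range (Module.finrank K L + 1), towerRel A b j) = ⊤ := by
  have hdim := Submodule.min_le_finrank_of_monotone (towerRel.span_mono K (A := A) (b := b))
    (fun _ => towerRel.span_eq_top_of_succ_eq K hA hb)
  refine ⟨fun k hk => (min_eq_left hk).ge.trans (hdim k), ?_⟩
  exact Submodule.eq_top_of_finrank_eq
    ((Submodule.finrank_le _).antisymm (by simpa using hdim (Module.finrank K L)))
end

section
/- Let 𝔤 be a finite-dimensional Lie algebra over a field K generated by a set A. Then for any k ∈ ℕ, the union T_{≤k}(A) of towers of length at most k spans a vector subspace of 𝔤 of dimension at least min{dim 𝔤, k}. -/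
variable {K : Type*} [Field K] {L : Type*} [LieRing L] [LieAlgebra K L]

/-!
Let `W k` be the span of `T_{≤k}(A)`. These subspaces increase with `k`, and `[a, W k] ⊆ W (k+1)`
for `a ∈ A`. If the chain stalls, `W (k+1) = W k`, then `W k` contains `A` and is stable under
`ad a` for every generator `a`, hence under `ad x` for every `x` in the Lie algebra they generate,
i.e. for all of `𝔤`; so `W k` is a subalgebra containing `A`, and `W k = 𝔤`. Thus the dimension of
`W k` grows by at least one at each step until it reaches `dim 𝔤`.
-/

theorem Submodule.min_finrank_le_finrank_of_monotone {R V : Type*} [DivisionRing R]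
    [AddCommGroup V] [Module R V] [FiniteDimensional R V] {W : ℕ → Submodule R V}
    (hW : Monotone W) (hstall : ∀ n, W (n + 1) = W n → W n = ⊤) (n : ℕ) :
    min (Module.finrank R V) n ≤ Module.finrank R (W n) := by
  induction n with
  | zero => simp
  | succ n ih =>
    by_cases hstep : W (n + 1) = W n
    · rw [hstep, hstall n hstep, finrank_top]
      exact min_le_left _ _
    · have hlt : W n < W (n + 1) := lt_of_le_of_ne (hW n.le_succ) (Ne.symm hstep)
      have := Submodule.finrank_lt_finrank_of_lt hlt
      omega

theorem LieSubalgebra.lie_mem_of_mem_lieSpan {R L M : Type*} [CommRing R] [LieRing L]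
    [LieAlgebra R L] [AddCommGroup M] [Module R M] [LieRingModule L M] [LieModule R L M]
    {s : Set L} {V : Submodule R M} (hs : ∀ a ∈ s, ∀ m ∈ V, ⁅a, m⁆ ∈ V) {x : L}
    (hx : x ∈ lieSpan R L s) {m : M} (hm : m ∈ V) : ⁅x, m⁆ ∈ V := by
  induction hx using lieSpan_induction generalizing m with
  | mem a ha => exact hs a ha m hm
  | zero => simp
  | add x y _ _ hx hy => rw [add_lie]; exact add_mem (hx hm) (hy hm)
  | smul t x _ hx => rw [smul_lie]; exact V.smul_mem t (hx hm)
  | lie x y _ _ hx hy => rw [lie_lie]; exact sub_mem (hx (hy hm)) (hy (hx hm))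

theorem Submodule.eq_top_of_lie_mem_of_lieSpan_eq_top {R L : Type*} [CommRing R] [LieRing L]
    [LieAlgebra R L] {s : Set L} (hs : LieSubalgebra.lieSpan R L s = ⊤) {V : Submodule R L}
    (hsV : s ⊆ V) (hV : ∀ a ∈ s, ∀ x ∈ V, ⁅a, x⁆ ∈ V) : V = ⊤ := by
  let V' : LieSubalgebra R L :=
    { V with
      lie_mem' := fun {x _} _ hy =>
        LieSubalgebra.lie_mem_of_mem_lieSpan hV (hs ▸ LieSubalgebra.mem_top x) hy }
  have hV' : V' = ⊤ := eq_top_iff.mpr (hs ▸ LieSubalgebra.lieSpan_le.mpr hsV)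
  exact Submodule.eq_top_iff'.mpr fun x => (hV'.symm ▸ LieSubalgebra.mem_top x : x ∈ V')

variable (K) in
def towerSpan (A : Set L) (n : ℕ) : Submodule K L :=
  Submodule.span K (⋃ j ∈ Finset.range (n + 1), tower A j)

theorem towerSpan_mono (A : Set L) : Monotone (towerSpan K A) := fun _ _ hmn =>
  Submodule.span_mono <| Set.biUnion_subset_biUnion_left <| by simpa using hmn

theorem subset_towerSpan_succ (A : Set L) (n : ℕ) : A ⊆ towerSpan K A (n + 1) := fun a ha =>
  Submodule.subset_span <| Set.mem_biUnion (x := 1) (by simp) ha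

theorem lie_mem_tower_succ {A : Set L} {a t : L} (ha : a ∈ A) {j : ℕ} (ht : t ∈ tower A (j + 1)) :
    ⁅a, t⁆ ∈ tower A (j + 2) :=
  Or.inl (Set.mem_image2_of_mem ha ht)

theorem lie_mem_towerSpan_succ {A : Set L} {a : L} (ha : a ∈ A) {n : ℕ} {x : L}
    (hx : x ∈ towerSpan K A n) : ⁅a, x⁆ ∈ towerSpan K A (n + 1) := by
  have himage := Submodule.apply_mem_span_image_of_mem_span (LieAlgebra.ad K L a) hx
  refine Submodule.span_mono ?_ himage
  rintro _ ⟨t, ht, rfl⟩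
  obtain ⟨j, hj, htj⟩ := Set.mem_iUnion₂.mp ht
  rw [Finset.mem_range] at hj
  match j, htj with
  | 0, htj =>
    rw [tower, Set.mem_singleton_iff] at htj
    subst htj
    exact Set.mem_biUnion (x := 0) (by simp) (by simp [tower])
  | j + 1, htj =>
    exact Set.mem_biUnion (x := j + 2) (Finset.mem_range.mpr (by omega))
      (lie_mem_tower_succ ha htj)

theorem towerSpan_eq_top_of_succ_eq {A : Set L} (hA : LieSubalgebra.lieSpan K L A = ⊤) {n : ℕ}
    (hstall : towerSpan K A (n + 1) = towerSpan K A n) : towerSpan K A n = ⊤ :=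
  Submodule.eq_top_of_lie_mem_of_lieSpan_eq_top hA (hstall ▸ subset_towerSpan_succ A n)
    fun _ ha _ hx => hstall ▸ lie_mem_towerSpan_succ ha hx

/-- If `A` generates a finite-dimensional Lie algebra `𝔤`, then `T_{≤k}(A)` spans a subspace
of dimension at least `min (dim 𝔤) k`. -/
theorem stmt2 [FiniteDimensional K L] (A : Set L)
    (hA : LieSubalgebra.lieSpan K L A = ⊤) (k : ℕ) :
    min (Module.finrank K L) k ≤
      Module.finrank K ↥(Submodule.span K (⋃ j ∈ Finset.range (k + 1), tower A j)) :=
  Submodule.min_finrank_le_finrank_of_monotone (towerSpan_mono A)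
    (fun _ => towerSpan_eq_top_of_succ_eq hA) k
end
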